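/- arXiv:2103.07737 — 3 statements merged into one kernel-verified Lean document; each statement's English description precedes it below -/
import Mathlib

section
/- Let σ be a 2-structure and let X ⊊ V(σ) be such that σ[X] is prime, with X̄ = V(σ)∖X. Then the family p_{(σ,X̄)} = {Ext_σ(X), ⟨X⟩_σ} ∪ {X_σ(α) : α ∈ X} is a partition of X̄ (its members are pairwise disjoint and their union is X̄). Moreover: (1) for v ∈ ⟨X⟩_σ and w ∈ X̄∖⟨X⟩_σ, if σ[X∪{v,w}] is not prime, then X∪{w} is a module of σ[X∪{v,w}]; (2) for α ∈ X, v ∈ X_σ(α) and w ∈ X̄∖X_σ(α), if σ[X∪{v,w}] is not prime, then {α,v} is a module of σ[X∪{v,w}]; (3) for distinct v, w ∈ Ext_σ(X), if σ[X∪{v,w}] is not prime, then {v,w} is a module of σ[X∪{v,w}]. -/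
/-!
Formalization of 2-structures (Ehrenfeucht et al.), modules, primality,
criticality, the outside partition/graph, and (discrete) half graphs.
-/

universe u

variable {V : Type u}

/-- A 2-structure on the vertex type `V`: an equivalence relation on ordered
pairs of (distinct) vertices.  Only its values on off-diagonal pairs matter. -/
structure TwoStructure (V : Type u) where
  rel : V × V → V × V → Prop
  refl : ∀ p : V × V, p.1 ≠ p.2 → rel p p
  symm : ∀ {p q : V × V}, rel p q → rel q p
  trans : ∀ {p q r : V × V}, rel p q → rel q r → rel p r

namespace TwoStructure

variable (σ : TwoStructure V)

/-- `M` is a module of the induced substructure `σ[W]`. -/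
def IsModuleOn (W M : Set V) : Prop :=
  M ⊆ W ∧ ∀ x ∈ M, ∀ y ∈ M, ∀ v ∈ W \ M,
    σ.rel (x, v) (y, v) ∧ σ.rel (v, x) (v, y)

/-- The induced substructure `σ[W]` is prime: it has at least 3 vertices and
all of its modules are trivial. -/
def IsPrimeOn (W : Set V) : Prop :=
  3 ≤ W.encard ∧ ∀ M : Set V, σ.IsModuleOn W M → M = ∅ ∨ M = W ∨ ∃ v, M = {v}

/-- The induced substructure `σ[W]` is `S`-critical: it is prime and removing
any vertex of `S` destroys primality. -/
def IsCriticalOn (W S : Set V) : Prop :=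
  σ.IsPrimeOn W ∧ ∀ v ∈ S, ¬ σ.IsPrimeOn (W \ {v})

/-- `Ext_σ(X)`: the vertices `v ∉ X` with `σ[X ∪ {v}]` prime. -/
def extSet (X : Set V) : Set V := {v | v ∉ X ∧ σ.IsPrimeOn (X ∪ {v})}

/-- `⟨X⟩_σ`: the vertices `v ∉ X` such that `X` is a module of `σ[X ∪ {v}]`. -/
def innSet (X : Set V) : Set V := {v | v ∉ X ∧ σ.IsModuleOn (X ∪ {v}) X}

/-- `X_σ(α)`: the vertices `v ∉ X` such that `{α, v}` is a module of `σ[X ∪ {v}]`. -/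
def attSet (X : Set V) (α : V) : Set V :=
  {v | v ∉ X ∧ σ.IsModuleOn (X ∪ {v}) {α, v}}

/-- The outside partition `p_{(σ, X̄)}`. -/
def pBlocks (X : Set V) : Set (Set V) :=
  {σ.extSet X, σ.innSet X} ∪ (fun α => σ.attSet X α) '' X

/-- `⟨X⟩_σ^{(e,f)}` where the classes `e` and `f` are given by representative
pairs: vertices `v ∈ ⟨X⟩_σ` with `(v,α) ≡_σ e` and `(α,v) ≡_σ f` for all `α ∈ X`. -/
def innSetC (X : Set V) (e f : V × V) : Set V :=
  {v | v ∈ σ.innSet X ∧ ∀ α ∈ X, σ.rel (v, α) e ∧ σ.rel (α, v) f}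

/-- `X_σ^{(e,f)}(α)` where the classes `e` and `f` are given by representative
pairs. -/
def attSetC (X : Set V) (α : V) (e f : V × V) : Set V :=
  {v | v ∈ σ.attSet X α ∧ σ.rel (v, α) e ∧ σ.rel (α, v) f}

/-- The refined outside partition `q_{(σ, X̄)}`. -/
def qBlocks (X : Set V) : Set (Set V) :=
  {σ.extSet X} ∪ {B | ∃ e f : V × V, B = σ.innSetC X e f}
    ∪ {B | ∃ α ∈ X, ∃ e f : V × V, B = σ.attSetC X α e f}

/-- `q^a`: the blocks of `q_{(σ, X̄)}` other than `Ext_σ(X)` that are not of the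
symmetric form `⟨X⟩_σ^{(e,e)}` or `X_σ^{(e,e)}(α)`. -/
def qaBlocks (X : Set V) : Set (Set V) :=
  {B | B ∈ σ.qBlocks X ∧ B ≠ σ.extSet X ∧
    ¬ ∃ e : V × V, B = σ.innSetC X e e ∨ ∃ α ∈ X, B = σ.attSetC X α e e}

/-- The outside graph `Γ_{(σ, X̄)}`: on the vertex set `X̄ = Xᶜ`, two distinct
vertices `v, w` are adjacent when `σ[X ∪ {v, w}]` is prime.  (Vertices of `X`
are not incident to any edge.) -/
def outsideGraph (X : Set V) : SimpleGraph V where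
  Adj v w := v ∉ X ∧ w ∉ X ∧ v ≠ w ∧ σ.IsPrimeOn (X ∪ {v, w})
  symm := by
    constructor
    rintro v w ⟨hv, hw, hvw, hp⟩
    refine ⟨hw, hv, hvw.symm, ?_⟩
    rwa [Set.pair_comm w v]
  loopless := by
    constructor
    rintro v ⟨-, -, h, -⟩
    exact h rfl

/-- `C` is (the vertex set of) a connected component of the outside graph
`Γ_{(σ, X̄)}` (a component of the graph induced on `X̄`). -/
def IsComponent (X : Set V) (C : Set V) : Prop :=
  ∃ v, v ∉ X ∧ C = {w | (σ.outsideGraph X).Reachable v w}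

end TwoStructure

/-- `M` is a module of the subgraph of `G` induced on `W`. -/
def GraphIsModuleOn (G : SimpleGraph V) (W M : Set V) : Prop :=
  M ⊆ W ∧ ∀ v ∈ W \ M, (∀ x ∈ M, G.Adj v x) ∨ (∀ x ∈ M, ¬ G.Adj v x)

/-- The subgraph of `G` induced on `W` is prime. -/
def GraphIsPrimeOn (G : SimpleGraph V) (W : Set V) : Prop :=
  3 ≤ W.encard ∧ ∀ M : Set V, GraphIsModuleOn G W M → M = ∅ ∨ M = W ∨ ∃ v, M = {v}

/-- The subgraph of `G` induced on `W` is critical: prime, and removing any of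
its vertices destroys primality. -/
def GraphIsCriticalOn (G : SimpleGraph V) (W : Set V) : Prop :=
  GraphIsPrimeOn G W ∧ ∀ v ∈ W, ¬ GraphIsPrimeOn G (W \ {v})

/-- The subgraph of `G` induced on `S` contains an induced path `P₅` on five
vertices. -/
def HasInducedP5On (G : SimpleGraph V) (S : Set V) : Prop :=
  ∃ a b c d e : V, a ∈ S ∧ b ∈ S ∧ c ∈ S ∧ d ∈ S ∧ e ∈ S ∧
    a ≠ b ∧ a ≠ c ∧ a ≠ d ∧ a ≠ e ∧ b ≠ c ∧ b ≠ d ∧ b ≠ e ∧ c ≠ d ∧ c ≠ e ∧ d ≠ e ∧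
    G.Adj a b ∧ G.Adj b c ∧ G.Adj c d ∧ G.Adj d e ∧
    ¬ G.Adj a c ∧ ¬ G.Adj a d ∧ ¬ G.Adj a e ∧ ¬ G.Adj b d ∧ ¬ G.Adj b e ∧ ¬ G.Adj c e

/-- `r` is a linear order on the set `X`. -/
def IsLinearOrderOn (X : Set V) (r : V → V → Prop) : Prop :=
  (∀ x ∈ X, r x x) ∧
  (∀ x ∈ X, ∀ y ∈ X, r x y → r y x → x = y) ∧
  (∀ x ∈ X, ∀ y ∈ X, ∀ z ∈ X, r x y → r y z → r x z) ∧
  (∀ x ∈ X, ∀ y ∈ X, r x y ∨ r y x)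

/-- The linear order `r` on `X` is discrete: every element other than the
minimum has an immediate predecessor, and every element other than the maximum
has an immediate successor. -/
def IsDiscreteOn (X : Set V) (r : V → V → Prop) : Prop :=
  (∀ x ∈ X, ¬ (∀ y ∈ X, r x y) →
    ∃ p ∈ X, p ≠ x ∧ r p x ∧ ∀ z ∈ X, r p z → r z x → z = p ∨ z = x) ∧
  (∀ x ∈ X, ¬ (∀ y ∈ X, r y x) →
    ∃ s ∈ X, s ≠ x ∧ r x s ∧ ∀ z ∈ X, r x z → r z s → z = x ∨ z = s)

/-- `G` is the half graph determined by the bipartition `{X, Y}` of its vertex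
set, the linear order `r` on `X`, and the bijection `φ : X → Y`: the edges of
`G` are exactly the pairs `{x, φ x'}` with `x ≤ x'` in `r`. -/
def IsHalfGraphWith (G : SimpleGraph V) (X Y : Set V) (r : V → V → Prop)
    (φ : V → V) : Prop :=
  Disjoint X Y ∧ X ∪ Y = Set.univ ∧ IsLinearOrderOn X r ∧ Set.BijOn φ X Y ∧
    ∀ u v : V, G.Adj u v ↔ ∃ x ∈ X, ∃ x' ∈ X, r x x' ∧
      ((u = x ∧ v = φ x') ∨ (v = x ∧ u = φ x'))

/-- `G` is a half graph. -/
def IsHalfGraph (G : SimpleGraph V) : Prop :=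
  ∃ (X Y : Set V) (r : V → V → Prop) (φ : V → V), IsHalfGraphWith G X Y r φ

/-- `G` is a discrete half graph: a half graph whose defining linear order is
discrete. -/
def IsDiscreteHalfGraph (G : SimpleGraph V) : Prop :=
  ∃ (X Y : Set V) (r : V → V → Prop) (φ : V → V),
    IsHalfGraphWith G X Y r φ ∧ IsDiscreteOn X r

/-- `G` is bipartite: its vertex set splits into two independent sets. -/
def IsBipartite (G : SimpleGraph V) : Prop :=
  ∃ X Y : Set V, Disjoint X Y ∧ X ∪ Y = Set.univ ∧
    (∀ u ∈ X, ∀ v ∈ X, ¬ G.Adj u v) ∧ (∀ u ∈ Y, ∀ v ∈ Y, ¬ G.Adj u v)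

/-!
If `σ[X]` is prime, a module of `σ[X ∪ Y]` meets `X` in `∅`, in `X` or in a single vertex.
Hence the nontrivial modules of `σ[X ∪ {v}]` are `X` and the pairs `{α, v}`, and those of
`σ[X ∪ {v, w}]` come in seven shapes. The blocks `Ext`, `⟨X⟩` and `X(α)` are disjoint because
two modules of different kinds in `σ[X ∪ {v}]` would combine, by union or difference, into a
nontrivial module of `σ[X]`. For the three assertions, restricting a nontrivial module of
`σ[X ∪ {v, w}]` to `σ[X ∪ {v}]` and `σ[X ∪ {w}]` locates `v` and `w` in the partition, which
rules out all shapes but the claimed one, except where `w` is a twin of a vertex `b` of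
`X ∪ {v}` (that is, `{b, w}` is a module): then modules of `σ[X ∪ {v}]` lift to `σ[X ∪ {v, w}]`.
-/

lemma nontrivial_sdiff_singleton_of_three_le_encard {s : Set V} {a : V} (hs : 3 ≤ s.encard)
    (ha : a ∈ s) :
    (s \ {a}).Nontrivial := by
  rw [← Set.one_lt_encard_iff_nontrivial]
  by_contra! h
  have := hs.trans (Set.encard_sdiff_singleton_add_one ha).ge
  have := this.trans (add_le_add_left h 1)
  norm_num at this

namespace TwoStructure

variable {σ : TwoStructure V} {U W X M N : Set V} {a b v w α β : V}

lemma IsModuleOn.inter (hM : σ.IsModuleOn W M) (hU : U ⊆ W) : σ.IsModuleOn U (M ∩ U) :=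
  ⟨Set.inter_subset_right, fun x hx y hy u hu =>
    hM.2 x hx.1 y hy.1 u ⟨hU hu.1, fun huM => hu.2 ⟨huM, hu.1⟩⟩⟩

lemma IsModuleOn.restrict (hM : σ.IsModuleOn W M) (hU : U ⊆ W) (hN : M ∩ U = N) :
    σ.IsModuleOn U N :=
  hN ▸ hM.inter hU

lemma isModuleOn_of_forall_rel (hMW : M ⊆ W) (c : V)
    (h : ∀ x ∈ M, ∀ u ∈ W \ M, σ.rel (x, u) (c, u) ∧ σ.rel (u, x) (u, c)) :
    σ.IsModuleOn W M := by
  refine ⟨hMW, fun x hx y hy u hu => ?_⟩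
  obtain ⟨hx₁, hx₂⟩ := h x hx u hu
  obtain ⟨hy₁, hy₂⟩ := h y hy u hu
  exact ⟨σ.trans hx₁ (σ.symm hy₁), σ.trans hx₂ (σ.symm hy₂)⟩

lemma IsModuleOn.trans (hN : σ.IsModuleOn M N) (hM : σ.IsModuleOn W M) :
    σ.IsModuleOn W N := by
  refine ⟨hN.1.trans hM.1, fun x hx y hy u hu => ?_⟩
  by_cases huM : u ∈ M
  · exact hN.2 x hx y hy u ⟨huM, hu.2⟩
  · exact hM.2 x (hN.1 hx) y (hN.1 hy) u ⟨hu.1, huM⟩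

lemma IsModuleOn.union (hM : σ.IsModuleOn W M) (hN : σ.IsModuleOn W N) (ha : a ∈ M ∩ N) :
    σ.IsModuleOn W (M ∪ N) := by
  refine isModuleOn_of_forall_rel (Set.union_subset hM.1 hN.1) a ?_
  rintro x (hx | hx) u ⟨huW, hu⟩
  · exact hM.2 x hx a ha.1 u ⟨huW, fun h => hu (Or.inl h)⟩
  · exact hN.2 x hx a ha.2 u ⟨huW, fun h => hu (Or.inr h)⟩

lemma IsModuleOn.diff (hM : σ.IsModuleOn W M) (hN : σ.IsModuleOn W N)
    (hNM : ¬ N ⊆ M) : σ.IsModuleOn W (M \ N) := by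
  obtain ⟨z, hzN, hzM⟩ := Set.not_subset.1 hNM
  refine ⟨Set.sdiff_subset.trans hM.1, fun x hx y hy u hu => ?_⟩
  by_cases huM : u ∈ M
  · have huN : u ∈ N := by_contra fun huN => hu.2 ⟨huM, huN⟩
    have hxu := hN.2 u huN z hzN x ⟨hM.1 hx.1, hx.2⟩
    have hyu := hN.2 u huN z hzN y ⟨hM.1 hy.1, hy.2⟩
    have hxy := hM.2 x hx.1 y hy.1 z ⟨hN.1 hzN, hzM⟩
    exact ⟨σ.trans hxu.2 (σ.trans hxy.1 (σ.symm hyu.2)),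
      σ.trans hxu.1 (σ.trans hxy.2 (σ.symm hyu.1))⟩
  · exact hM.2 x hx.1 y hy.1 u ⟨hu.1, huM⟩

lemma IsModuleOn.of_twin_of_notMem (hN : σ.IsModuleOn U N) (hb : b ∈ U) (hbN : b ∉ N)
    (htwin : σ.IsModuleOn W {b, w}) (hUW : U ⊆ W) (hWU : W ⊆ insert w U) :
    σ.IsModuleOn W N := by
  refine ⟨hN.1.trans hUW, fun x hx y hy u hu => ?_⟩
  rcases hWU hu.1 with rfl | huU
  · have hxb : x ∉ ({b, u} : Set V) := by
      rintro (rfl | rfl)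
      exacts [hbN hx, hu.2 hx]
    have hyb : y ∉ ({b, u} : Set V) := by
      rintro (rfl | rfl)
      exacts [hbN hy, hu.2 hy]
    have hx' := htwin.2 b (Or.inl rfl) u (Or.inr rfl) x ⟨hUW (hN.1 hx), hxb⟩
    have hy' := htwin.2 b (Or.inl rfl) u (Or.inr rfl) y ⟨hUW (hN.1 hy), hyb⟩
    have hxy := hN.2 x hx y hy b ⟨hb, hbN⟩
    exact ⟨σ.trans (σ.symm hx'.2) (σ.trans hxy.1 hy'.2),
      σ.trans (σ.symm hx'.1) (σ.trans hxy.2 hy'.1)⟩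
  · exact hN.2 x hx y hy u ⟨huU, hu.2⟩

lemma IsModuleOn.insert_of_twin (hN : σ.IsModuleOn U N) (ha : a ∈ N)
    (htwin : σ.IsModuleOn W {a, w}) (hUW : U ⊆ W) (hWU : W ⊆ insert w U) :
    σ.IsModuleOn W (insert w N) := by
  have hwW : w ∈ W := htwin.1 (Or.inr rfl)
  refine isModuleOn_of_forall_rel (Set.insert_subset hwW (hN.1.trans hUW)) a ?_
  rintro x hx u ⟨huW, hu⟩
  have huw : u ≠ w := fun h => hu (Or.inl h)
  have huN : u ∉ N := fun h => hu (Or.inr h)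
  have huU : u ∈ U := (hWU huW).resolve_left huw
  rcases hx with rfl | hx
  · have := htwin.2 a (Or.inl rfl) x (Or.inr rfl) u
      ⟨huW, by rintro (rfl | rfl) <;> contradiction⟩
    exact ⟨σ.symm this.1, σ.symm this.2⟩
  · exact hN.2 x hx a ha u ⟨huU, huN⟩

lemma IsPrimeOn.nontrivial (hW : σ.IsPrimeOn W) : W.Nontrivial :=
  Set.one_lt_encard_iff_nontrivial.1 (lt_of_lt_of_le (by norm_num) hW.1)

lemma IsPrimeOn.eq_of_isModuleOn (hW : σ.IsPrimeOn W) (hM : σ.IsModuleOn W M)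
    (hnt : M.Nontrivial) : M = W := by
  rcases hW.2 M hM with rfl | h | ⟨a, rfl⟩
  · exact absurd hnt.nonempty Set.not_nonempty_empty
  · exact h
  · exact absurd hnt Set.not_nontrivial_singleton

lemma IsPrimeOn.not_isModuleOn_pair (hW : σ.IsPrimeOn W) (hab : a ≠ b) :
    ¬ σ.IsModuleOn W {a, b} := fun hM => by
  have h3 := hW.1
  rw [← hW.eq_of_isModuleOn hM (Set.nontrivial_pair hab), Set.encard_pair hab] at h3
  norm_num at h3

lemma exists_isModuleOn_of_not_isPrimeOn (h3 : 3 ≤ W.encard) (hW : ¬ σ.IsPrimeOn W) :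
    ∃ M, σ.IsModuleOn W M ∧ M.Nontrivial ∧ M ≠ W := by
  simp only [IsPrimeOn, h3, true_and, not_forall, not_or] at hW
  obtain ⟨M, hM, hne, hMW, hsing⟩ := hW
  exact ⟨M, hM,
    (Set.nonempty_iff_ne_empty.2 hne).exists_eq_singleton_or_nontrivial.resolve_left hsing, hMW⟩

lemma IsPrimeOn.eq_or_eq_pair_of_isModuleOn_union_singleton (hXp : σ.IsPrimeOn X)
    (hM : σ.IsModuleOn (X ∪ {v}) M) (hnt : M.Nontrivial) (hMW : M ≠ X ∪ {v}) :
    M = X ∨ ∃ α ∈ X, M = {α, v} := by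
  have hsplit : M ∩ X ∪ M \ X = M := Set.inter_union_sdiff M X
  have hdiff : M \ X ⊆ {v} := fun x hx => (hM.1 hx.1).resolve_left hx.2
  rcases hXp.2 _ (hM.inter Set.subset_union_left) with h | h | ⟨α, h⟩
  · rcases Set.subset_singleton_iff_eq.1 hdiff with h' | h' <;> rw [h, h'] at hsplit <;>
      subst hsplit <;> simp_all
  · rcases Set.subset_singleton_iff_eq.1 hdiff with h' | h' <;> rw [h, h'] at hsplit <;>
      subst hsplit <;> simp_all
  · have hα : α ∈ X := (h.symm ▸ rfl : α ∈ M ∩ X).2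
    rcases Set.subset_singleton_iff_eq.1 hdiff with h' | h' <;> rw [h, h'] at hsplit <;>
      subst hsplit <;> simp only [Set.union_empty, Set.singleton_union] at hnt ⊢
    · simp at hnt
    · exact Or.inr ⟨α, hα, rfl⟩

lemma IsPrimeOn.isModuleOn_union_pair_cases (hXp : σ.IsPrimeOn X)
    (hM : σ.IsModuleOn (X ∪ {v, w}) M) (hnt : M.Nontrivial) (hMW : M ≠ X ∪ {v, w}) :
    M = X ∨ M = X ∪ {v} ∨ M = X ∪ {w} ∨ M = {v, w} ∨
      ∃ α ∈ X, M = {α, v} ∨ M = {α, w} ∨ M = {α, v, w} := by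
  have hsplit : M ∩ X ∪ M \ X = M := Set.inter_union_sdiff M X
  have hdiff : M \ X ⊆ {v, w} := fun x hx => (hM.1 hx.1).resolve_left hx.2
  rcases hXp.2 _ (hM.inter Set.subset_union_left) with h | h | ⟨α, h⟩
  · rcases Set.subset_pair_iff_eq.1 hdiff with h' | h' | h' | h' <;> rw [h, h'] at hsplit <;>
      subst hsplit <;> simp_all
  · rcases Set.subset_pair_iff_eq.1 hdiff with h' | h' | h' | h' <;> rw [h, h'] at hsplit <;>
      subst hsplit <;> simp_all
  · have hα : α ∈ X := (h.symm ▸ rfl : α ∈ M ∩ X).2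
    rcases Set.subset_pair_iff_eq.1 hdiff with h' | h' | h' | h' <;> rw [h, h'] at hsplit <;>
      subst hsplit <;> simp only [Set.union_empty, Set.singleton_union] at hnt ⊢
    · simp at hnt
    all_goals exact Or.inr (Or.inr (Or.inr (Or.inr ⟨α, hα, by simp⟩)))

lemma extSet_disjoint_innSet (hX : X.Nontrivial) : Disjoint (σ.extSet X) (σ.innSet X) := by
  refine Set.disjoint_left.2 fun v ⟨hvX, hprime⟩ ⟨_, hinn⟩ => hvX ?_
  rw [hprime.eq_of_isModuleOn hinn hX]
  exact Or.inr rfl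

lemma extSet_disjoint_attSet (hα : α ∈ X) : Disjoint (σ.extSet X) (σ.attSet X α) :=
  Set.disjoint_left.2 fun _ ⟨hvX, hprime⟩ ⟨_, hatt⟩ =>
    hprime.not_isModuleOn_pair (ne_of_mem_of_not_mem hα hvX) hatt

lemma innSet_disjoint_attSet (hXp : σ.IsPrimeOn X) (hα : α ∈ X) :
    Disjoint (σ.innSet X) (σ.attSet X α) := by
  refine Set.disjoint_left.2 fun v ⟨hvX, hinn⟩ ⟨_, hatt⟩ => ?_
  have hmod : σ.IsModuleOn X (X \ {α, v}) :=
    (hinn.diff hatt fun h => hvX (h (Or.inr rfl))).restrict Set.subset_union_left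
      (Set.inter_eq_left.2 Set.sdiff_subset)
  have hnt : (X \ {α, v}).Nontrivial :=
    (nontrivial_sdiff_singleton_of_three_le_encard hXp.1 hα).mono fun x hx =>
      ⟨hx.1, by rintro (rfl | rfl); exacts [hx.2 rfl, hvX hx.1]⟩
  have hα' : α ∈ X \ {α, v} := (hXp.eq_of_isModuleOn hmod hnt).symm ▸ hα
  exact hα'.2 (Or.inl rfl)

lemma attSet_disjoint_attSet (hXp : σ.IsPrimeOn X) (hα : α ∈ X) (hβ : β ∈ X) (hαβ : α ≠ β) :
    Disjoint (σ.attSet X α) (σ.attSet X β) :=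
  Set.disjoint_left.2 fun _ ⟨hvX, hvα⟩ ⟨_, hvβ⟩ => hXp.not_isModuleOn_pair hαβ
    ((hvα.union hvβ ⟨Or.inr rfl, Or.inr rfl⟩).restrict Set.subset_union_left (by grind))

lemma extSet_union_innSet_union_attSet (hXp : σ.IsPrimeOn X) :
    σ.extSet X ∪ σ.innSet X ∪ (⋃ α ∈ X, σ.attSet X α) = Xᶜ := by
  refine Set.Subset.antisymm ?_ fun v hvX => ?_
  · simp only [Set.union_subset_iff, Set.iUnion_subset_iff]
    exact ⟨⟨fun v hv => hv.1, fun v hv => hv.1⟩, fun α _ v hv => hv.1⟩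
  by_cases hprime : σ.IsPrimeOn (X ∪ {v})
  · exact Or.inl (Or.inl ⟨hvX, hprime⟩)
  obtain ⟨M, hM, hnt, hMW⟩ := exists_isModuleOn_of_not_isPrimeOn
    (hXp.1.trans (Set.encard_mono Set.subset_union_left)) hprime
  rcases hXp.eq_or_eq_pair_of_isModuleOn_union_singleton hM hnt hMW with rfl | ⟨α, hα, rfl⟩
  · exact Or.inl (Or.inr ⟨hvX, hM⟩)
  · exact Or.inr (Set.mem_biUnion hα ⟨hvX, hM⟩)

lemma IsPrimeOn.exists_isModuleOn_union_pair (hXp : σ.IsPrimeOn X)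
    (hnp : ¬ σ.IsPrimeOn (X ∪ {v, w})) :
    ∃ M, σ.IsModuleOn (X ∪ {v, w}) M ∧ (M = X ∨ M = X ∪ {v} ∨ M = X ∪ {w} ∨ M = {v, w} ∨
      ∃ α ∈ X, M = {α, v} ∨ M = {α, w} ∨ M = {α, v, w}) := by
  obtain ⟨M, hM, hnt, hMW⟩ := exists_isModuleOn_of_not_isPrimeOn
    (hXp.1.trans (Set.encard_mono Set.subset_union_left)) hnp
  exact ⟨M, hM, hXp.isModuleOn_union_pair_cases hM hnt hMW⟩

lemma isModuleOn_union_singleton_of_mem_innSet (hXp : σ.IsPrimeOn X) (hv : v ∈ σ.innSet X)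
    (hw : w ∈ Xᶜ \ σ.innSet X) (hnp : ¬ σ.IsPrimeOn (X ∪ {v, w})) :
    σ.IsModuleOn (X ∪ {v, w}) (X ∪ {w}) := by
  obtain ⟨hvX, hv_inn⟩ := hv
  obtain ⟨hwX, hw_inn⟩ := hw
  have hvw : v ≠ w := fun h => hw_inn (h ▸ ⟨hvX, hv_inn⟩)
  have hXv : X ∪ {v} ⊆ X ∪ {v, w} := by grind
  have not_isModuleOn_X : ¬ σ.IsModuleOn (X ∪ {v, w}) X := fun h =>
    hw_inn ⟨hwX, h.restrict (by grind) (by grind)⟩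
  have not_att {β} (hβ : β ∈ X) : ¬ σ.IsModuleOn (X ∪ {v}) {β, v} := fun h =>
    Set.disjoint_left.1 (innSet_disjoint_attSet hXp hβ) ⟨hvX, hv_inn⟩ ⟨hvX, h⟩
  obtain ⟨M, hM, rfl | rfl | rfl | rfl | ⟨β, hβ, rfl | rfl | rfl⟩⟩ :=
    hXp.exists_isModuleOn_union_pair hnp
  · exact (not_isModuleOn_X hM).elim
  · exact (not_isModuleOn_X (hv_inn.trans hM)).elim
  · exact hM
  · exact (not_isModuleOn_X
      (hv_inn.of_twin_of_notMem (Or.inr rfl) hvX hM hXv (by grind))).elim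
  · exact (not_att hβ (hM.restrict hXv (by grind))).elim
  · rw [Set.union_singleton]
    exact hv_inn.insert_of_twin hβ hM hXv (by grind)
  · exact (not_att hβ (hM.restrict hXv (by grind))).elim

lemma isModuleOn_pair_of_mem_attSet (hXp : σ.IsPrimeOn X) (hα : α ∈ X)
    (hv : v ∈ σ.attSet X α) (hw : w ∈ Xᶜ \ σ.attSet X α) (hnp : ¬ σ.IsPrimeOn (X ∪ {v, w})) :
    σ.IsModuleOn (X ∪ {v, w}) {α, v} := by
  obtain ⟨hvX, hv_att⟩ := hv
  obtain ⟨hwX, hw_att⟩ := hw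
  have hvw : v ≠ w := fun h => hw_att (h ▸ ⟨hvX, hv_att⟩)
  have hXv : X ∪ {v} ⊆ X ∪ {v, w} := by grind
  have hXw : X ∪ {w} ⊆ X ∪ {v, w} := by grind
  have not_inn : ¬ σ.IsModuleOn (X ∪ {v}) X := fun h =>
    Set.disjoint_left.1 (innSet_disjoint_attSet hXp hα) ⟨hvX, h⟩ ⟨hvX, hv_att⟩
  have eq_of_att {β} (hβ : β ∈ X) (h : σ.IsModuleOn (X ∪ {v}) {β, v}) : β = α :=
    by_contra fun hβα => Set.disjoint_left.1 (attSet_disjoint_attSet hXp hα hβ (Ne.symm hβα))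
      ⟨hvX, hv_att⟩ ⟨hvX, h⟩
  obtain ⟨M, hM, rfl | rfl | rfl | rfl | ⟨β, hβ, rfl | rfl | rfl⟩⟩ :=
    hXp.exists_isModuleOn_union_pair hnp
  · exact (not_inn (hM.restrict hXv (by grind))).elim
  · exact hv_att.trans hM
  · exact (not_inn (hM.restrict hXv (by grind))).elim
  · refine (hw_att ⟨hwX, ?_⟩).elim
    exact (hv_att.insert_of_twin (Or.inr rfl) hM hXv (by grind)).restrict hXw
      (by grind)
  · obtain rfl := eq_of_att hβ (hM.restrict hXv (by grind))
    exact hM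
  · have hβα : β ≠ α := by
      rintro rfl
      exact hw_att ⟨hwX, hM.restrict hXw (by grind)⟩
    exact hv_att.of_twin_of_notMem (Or.inl hβ) (by grind) hM hXv (by grind)
  · obtain rfl := eq_of_att hβ (hM.restrict hXv (by grind))
    exact (hw_att ⟨hwX, hM.restrict hXw (by grind)⟩).elim

lemma isModuleOn_pair_of_mem_extSet (hXp : σ.IsPrimeOn X) (hv : v ∈ σ.extSet X)
    (hw : w ∈ σ.extSet X) (hvw : v ≠ w) (hnp : ¬ σ.IsPrimeOn (X ∪ {v, w})) :
    σ.IsModuleOn (X ∪ {v, w}) {v, w} := by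
  have hXv : X ∪ {v} ⊆ X ∪ {v, w} := by grind
  have hXw : X ∪ {w} ⊆ X ∪ {v, w} := by grind
  have not_inn {u} (hu : u ∈ σ.extSet X) : u ∉ σ.innSet X :=
    Set.disjoint_left.1 (extSet_disjoint_innSet hXp.nontrivial) hu
  have not_att {u β} (hβ : β ∈ X) (hu : u ∈ σ.extSet X) : u ∉ σ.attSet X β :=
    Set.disjoint_left.1 (extSet_disjoint_attSet hβ) hu
  have hvX := hv.1
  have hwX := hw.1
  obtain ⟨M, hM, rfl | rfl | rfl | rfl | ⟨β, hβ, rfl | rfl | rfl⟩⟩ :=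
    hXp.exists_isModuleOn_union_pair hnp
  · exact (not_inn hv ⟨hvX, hM.restrict hXv (by grind)⟩).elim
  · exact (not_inn hw ⟨hwX, hM.restrict hXw (by grind)⟩).elim
  · exact (not_inn hv ⟨hvX, hM.restrict hXv (by grind)⟩).elim
  · exact hM
  · exact (not_att hβ hv ⟨hvX, hM.restrict hXv (by grind)⟩).elim
  · exact (not_att hβ hw ⟨hwX, hM.restrict hXw (by grind)⟩).elim
  · exact (not_att hβ hv ⟨hvX, hM.restrict hXv (by grind)⟩).elim

end TwoStructure

theorem statement0_general (σ : TwoStructure V) (X : Set V)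
    (hXp : σ.IsPrimeOn X) :
    (Disjoint (σ.extSet X) (σ.innSet X) ∧
      (∀ α ∈ X, Disjoint (σ.extSet X) (σ.attSet X α) ∧
        Disjoint (σ.innSet X) (σ.attSet X α)) ∧
      (∀ α ∈ X, ∀ β ∈ X, α ≠ β → Disjoint (σ.attSet X α) (σ.attSet X β)) ∧
      (σ.extSet X ∪ σ.innSet X ∪ (⋃ α ∈ X, σ.attSet X α)) = Xᶜ) ∧
    (∀ v ∈ σ.innSet X, ∀ w ∈ Xᶜ \ σ.innSet X,
      ¬ σ.IsPrimeOn (X ∪ {v, w}) → σ.IsModuleOn (X ∪ {v, w}) (X ∪ {w})) ∧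
    (∀ α ∈ X, ∀ v ∈ σ.attSet X α, ∀ w ∈ Xᶜ \ σ.attSet X α,
      ¬ σ.IsPrimeOn (X ∪ {v, w}) → σ.IsModuleOn (X ∪ {v, w}) {α, v}) ∧
    (∀ v ∈ σ.extSet X, ∀ w ∈ σ.extSet X, v ≠ w →
      ¬ σ.IsPrimeOn (X ∪ {v, w}) → σ.IsModuleOn (X ∪ {v, w}) {v, w}) :=
  ⟨⟨TwoStructure.extSet_disjoint_innSet hXp.nontrivial,
      fun _ hα => ⟨TwoStructure.extSet_disjoint_attSet hα,
        TwoStructure.innSet_disjoint_attSet hXp hα⟩,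
      fun _ hα _ hβ hαβ => TwoStructure.attSet_disjoint_attSet hXp hα hβ hαβ,
      TwoStructure.extSet_union_innSet_union_attSet hXp⟩,
    fun _ hv _ hw => TwoStructure.isModuleOn_union_singleton_of_mem_innSet hXp hv hw,
    fun _ hα _ hv _ hw => TwoStructure.isModuleOn_pair_of_mem_attSet hXp hα hv hw,
    fun _ hv _ hw hvw => TwoStructure.isModuleOn_pair_of_mem_extSet hXp hv hw hvw⟩

/-- Lemma 1.8 (Ehrenfeucht–Rozenberg): the outside partition, and the three
basic assertions about non-primality of two-vertex extensions. -/
theorem statement0 (σ : TwoStructure V) (X : Set V) (hX : X ⊂ Set.univ)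
    (hXp : σ.IsPrimeOn X) :
    (Disjoint (σ.extSet X) (σ.innSet X) ∧
      (∀ α ∈ X, Disjoint (σ.extSet X) (σ.attSet X α) ∧
        Disjoint (σ.innSet X) (σ.attSet X α)) ∧
      (∀ α ∈ X, ∀ β ∈ X, α ≠ β → Disjoint (σ.attSet X α) (σ.attSet X β)) ∧
      (σ.extSet X ∪ σ.innSet X ∪ (⋃ α ∈ X, σ.attSet X α)) = Xᶜ) ∧
    (∀ v ∈ σ.innSet X, ∀ w ∈ Xᶜ \ σ.innSet X,
      ¬ σ.IsPrimeOn (X ∪ {v, w}) → σ.IsModuleOn (X ∪ {v, w}) (X ∪ {w})) ∧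
    (∀ α ∈ X, ∀ v ∈ σ.attSet X α, ∀ w ∈ Xᶜ \ σ.attSet X α,
      ¬ σ.IsPrimeOn (X ∪ {v, w}) → σ.IsModuleOn (X ∪ {v, w}) {α, v}) ∧
    (∀ v ∈ σ.extSet X, ∀ w ∈ σ.extSet X, v ≠ w →
      ¬ σ.IsPrimeOn (X ∪ {v, w}) → σ.IsModuleOn (X ∪ {v, w}) {v, w}) :=
  statement0_general σ X hXp
end

section
/- Let σ be a 2-structure and let X ⊊ V(σ) be such that σ[X] is prime. (1) If M is a module of σ with X ⊆ M, then every element of V(σ)∖M is an isolated vertex of the outside graph Γ_{(σ,X̄)}. (2) If α ∈ X and M is a module of σ with M ∩ X = {α}, then every element of M∖{α} is an isolated vertex of Γ_{(σ,X̄)}. -/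
/-!
If `v, w ∉ X` were adjacent in the outside graph, then `σ[X ∪ {v, w}]` would be prime, yet a
module `M` of `σ` traces the module `M ∩ (X ∪ {v, w})` on it. When `X ⊆ M ∌ v`, this trace
contains the two or more vertices of `X` but misses `v`; when `M ∩ X = {α}` and `v ∈ M`, it
contains `α ≠ v` but misses the other vertices of `X`. Either way it is a nontrivial module.
-/

universe u

variable {V : Type u}

namespace TwoStructure

variable {σ : TwoStructure V} {W M N : Set V}

theorem IsModuleOn.restrict_s12 (hM : σ.IsModuleOn W M) {W' : Set V} (hW' : W' ⊆ W) :
    σ.IsModuleOn W' (M ∩ W') := by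
  refine ⟨Set.inter_subset_right, ?_⟩
  rintro x ⟨hxM, -⟩ y ⟨hyM, -⟩ v ⟨hvW', hvM⟩
  exact hM.2 x hxM y hyM v ⟨hW' hvW', fun h => hvM ⟨h, hvW'⟩⟩

theorem IsPrimeOn.eq_of_isModuleOn_s12 (hW : σ.IsPrimeOn W) (hN : σ.IsModuleOn W N)
    (hNt : N.Nontrivial) : N = W := by
  rcases hW.2 N hN with rfl | h | ⟨u, rfl⟩
  · exact absurd hNt.nonempty Set.not_nonempty_empty
  · exact h
  · exact absurd hNt Set.not_nontrivial_singleton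

theorem isPrimeOn_of_outsideGraph_adj {X : Set V} {v w : V} (h : (σ.outsideGraph X).Adj v w) :
    σ.IsPrimeOn (X ∪ {v, w}) :=
  h.2.2.2

theorem not_outsideGraph_adj_of_subset_isModuleOn {X : Set V} (hX : X.Nontrivial)
    (hM : σ.IsModuleOn Set.univ M) (hXM : X ⊆ M) {v : V} (hv : v ∉ M) (w : V) :
    ¬ (σ.outsideGraph X).Adj v w := by
  intro hvw
  have hN := hM.restrict_s12 (Set.subset_univ (X ∪ {v, w}))
  have hXN : X ⊆ M ∩ (X ∪ {v, w}) := Set.subset_inter hXM Set.subset_union_left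
  have hNW := (isPrimeOn_of_outsideGraph_adj hvw).eq_of_isModuleOn_s12 hN (hX.mono hXN)
  have hvN : v ∈ M ∩ (X ∪ {v, w}) := hNW.symm ▸ Or.inr (Or.inl rfl)
  exact hv hvN.1

theorem not_outsideGraph_adj_of_inter_eq_singleton {X : Set V} (hX : X.Nontrivial) {α : V}
    (hM : σ.IsModuleOn Set.univ M) (hMX : M ∩ X = {α}) {v : V} (hv : v ∈ M \ {α}) (w : V) :
    ¬ (σ.outsideGraph X).Adj v w := by
  intro hvw
  have hN := hM.restrict_s12 (Set.subset_univ (X ∪ {v, w}))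
  have hαM : α ∈ M ∩ X := hMX ▸ rfl
  have hNt : (M ∩ (X ∪ {v, w})).Nontrivial :=
    ⟨α, ⟨hαM.1, Or.inl hαM.2⟩, v, ⟨hv.1, Or.inr (Or.inl rfl)⟩, Ne.symm hv.2⟩
  have hNW := (isPrimeOn_of_outsideGraph_adj hvw).eq_of_isModuleOn_s12 hN hNt
  obtain ⟨x, hxX, hxα⟩ := hX.exists_ne α
  have hxN : x ∈ M ∩ (X ∪ {v, w}) := hNW.symm ▸ Or.inl hxX
  have hxMX : x ∈ M ∩ X := ⟨hxN.1, hxX⟩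
  rw [hMX] at hxMX
  exact hxα hxMX

end TwoStructure

theorem statement12_general (σ : TwoStructure V) (X : Set V)
    (hXp : σ.IsPrimeOn X) :
    (∀ M : Set V, σ.IsModuleOn Set.univ M → X ⊆ M →
      ∀ v ∈ Mᶜ, ∀ w : V, ¬ (σ.outsideGraph X).Adj v w) ∧
    (∀ α ∈ X, ∀ M : Set V, σ.IsModuleOn Set.univ M → M ∩ X = {α} →
      ∀ v ∈ M \ {α}, ∀ w : V, ¬ (σ.outsideGraph X).Adj v w) := by
  have hX : X.Nontrivial :=
    Set.one_lt_encard_iff_nontrivial.mp (lt_of_lt_of_le (by norm_num) hXp.1)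
  exact ⟨fun M hM hXM v hv => σ.not_outsideGraph_adj_of_subset_isModuleOn hX hM hXM hv,
    fun α _ M hM hMX v hv => σ.not_outsideGraph_adj_of_inter_eq_singleton hX hM hMX hv⟩

/-- Lemma 2.2: modules of `σ` containing `X`, or meeting `X` in a single
vertex, produce isolated vertices of the outside graph. -/
theorem statement12 (σ : TwoStructure V) (X : Set V) (hX : X ⊂ Set.univ)
    (hXp : σ.IsPrimeOn X) :
    (∀ M : Set V, σ.IsModuleOn Set.univ M → X ⊆ M →
      ∀ v ∈ Mᶜ, ∀ w : V, ¬ (σ.outsideGraph X).Adj v w) ∧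
    (∀ α ∈ X, ∀ M : Set V, σ.IsModuleOn Set.univ M → M ∩ X = {α} →
      ∀ v ∈ M \ {α}, ∀ w : V, ¬ (σ.outsideGraph X).Adj v w) :=
  statement12_general σ X hXp
end

section
/- Let σ be a 2-structure and let X ⊊ V(σ) be such that σ[X] is prime. Suppose Statement (S1) holds, i.e. Ext_σ(X) = ∅. Let M ⊆ X̄. If M is a module of σ, then M is a module of the outside graph Γ_{(σ,X̄)}, and there exist a block B_p of p_{(σ,X̄)} and a block B_q of q_{(σ,X̄)} such that M ⊆ B_q ⊆ B_p and M is a module of σ[B_p]. -/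
/-!
Formalization of 2-structures (Ehrenfeucht et al.), modules, primality,
criticality, the outside partition/graph, and (discrete) half graphs.
-/

universe u

variable {V : Type u}

/-!
If `x, y` lie in a module `M` of `σ`, the transposition of `x` and `y` is an isomorphism
from `σ[W ∪ {x}]` onto `σ[W ∪ {y}]` for every `W` disjoint from `M`. Hence primality of
`σ[X ∪ {v, x}]` and the membership of `x` in `⟨X⟩_σ` or `X_σ(α)` only depend on `M`, not
on `x ∈ M`. Since `Ext_σ(X) = ∅`, a vertex outside `X` lies in `⟨X⟩_σ` or in some `X_σ(α)`,
and then all of `M` lies in the corresponding block, even in its refinement in `q_{(σ,X̄)}`.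
-/

namespace TwoStructure

variable {σ : TwoStructure V}

theorem IsModuleOn.inter_s13 {W W' N : Set V} (h : σ.IsModuleOn W N) (hW' : W' ⊆ W) :
    σ.IsModuleOn W' (N ∩ W') :=
  ⟨Set.inter_subset_right, fun x hx y hy v hv =>
    h.2 x hx.1 y hy.1 v ⟨hW' hv.1, fun hvN => hv.2 ⟨hvN, hv.1⟩⟩⟩

theorem IsModuleOn.of_subset {W W' N : Set V} (h : σ.IsModuleOn W N) (hN : N ⊆ W')
    (hW' : W' ⊆ W) : σ.IsModuleOn W' N := by
  simpa only [Set.inter_eq_left.mpr hN] using h.inter_s13 hW'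

/-- `e` is an isomorphism from `σ[W]` onto `σ[e '' W]`. -/
def PreservesRelOn (σ : TwoStructure V) (e : V ≃ V) (W : Set V) : Prop :=
  ∀ a ∈ W, ∀ b ∈ W, a ≠ b → σ.rel (a, b) (e a, e b)

namespace PreservesRelOn

variable {e : V ≃ V} {W : Set V}

theorem mono {W' : Set V} (h : σ.PreservesRelOn e W) (hW' : W' ⊆ W) :
    σ.PreservesRelOn e W' :=
  fun a ha b hb hab => h a (hW' ha) b (hW' hb) hab

theorem symm (h : σ.PreservesRelOn e W) : σ.PreservesRelOn e.symm (e '' W) := by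
  rintro _ ⟨a, ha, rfl⟩ _ ⟨b, hb, rfl⟩ hab
  simpa only [Equiv.symm_apply_apply] using σ.symm (h a ha b hb fun h => hab (h ▸ rfl))

theorem isModuleOn_image {N : Set V} (h : σ.PreservesRelOn e W) (hN : σ.IsModuleOn W N) :
    σ.IsModuleOn (e '' W) (e '' N) := by
  refine ⟨Set.image_mono hN.1, ?_⟩
  rintro _ ⟨a, ha, rfl⟩ _ ⟨b, hb, rfl⟩ _ ⟨⟨c, hc, rfl⟩, hcN⟩
  have hcN : c ∉ N := fun h => hcN (Set.mem_image_of_mem e h)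
  have hac : a ≠ c := fun h => hcN (h ▸ ha)
  have hbc : b ≠ c := fun h => hcN (h ▸ hb)
  obtain ⟨hout, hin⟩ := hN.2 a ha b hb c ⟨hc, hcN⟩
  exact ⟨σ.trans (σ.symm (h a (hN.1 ha) c hc hac)) (σ.trans hout (h b (hN.1 hb) c hc hbc)),
    σ.trans (σ.symm (h c hc a (hN.1 ha) hac.symm)) (σ.trans hin (h c hc b (hN.1 hb) hbc.symm))⟩

theorem isPrimeOn_image (h : σ.PreservesRelOn e W) (hW : σ.IsPrimeOn W) :
    σ.IsPrimeOn (e '' W) := by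
  refine ⟨e.injective.encard_image W ▸ hW.1, fun N hN => ?_⟩
  have hpull := h.symm.isModuleOn_image hN
  rw [Equiv.symm_image_image] at hpull
  rw [← e.image_symm_image N]
  rcases hW.2 _ hpull with h₀ | hall | ⟨v, hv⟩
  · exact Or.inl (by rw [h₀, Set.image_empty])
  · exact Or.inr (Or.inl (by rw [hall]))
  · exact Or.inr (Or.inr ⟨e v, by rw [hv, Set.image_singleton]⟩)

end PreservesRelOn

section Swap

variable [DecidableEq V]

theorem swap_image_eq_self {x y : V} {W : Set V} (hx : x ∉ W) (hy : y ∉ W) :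
    Equiv.swap x y '' W = W := by
  conv_rhs => rw [← Set.image_id W]
  exact Set.image_congr fun w hw =>
    Equiv.swap_apply_of_ne_of_ne (fun h => hx (h ▸ hw)) (fun h => hy (h ▸ hw))

theorem swap_image_union_singleton {x y : V} {W : Set V} (hx : x ∉ W) (hy : y ∉ W) :
    Equiv.swap x y '' (W ∪ {x}) = W ∪ {y} := by
  rw [Set.image_union, Set.image_singleton, Equiv.swap_apply_left, swap_image_eq_self hx hy]

section SwapInModule

variable {M : Set V} (hmod : σ.IsModuleOn Set.univ M) {x y : V} (hx : x ∈ M) (hy : y ∈ M)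
include hmod hx hy

theorem preservesRelOn_swap : σ.PreservesRelOn (Equiv.swap x y) (Mᶜ ∪ {x}) := by
  have fix : ∀ w ∉ M, Equiv.swap x y w = w := fun w hw =>
    Equiv.swap_apply_of_ne_of_ne (fun h => hw (h ▸ hx)) (fun h => hw (h ▸ hy))
  intro a ha b hb hab
  rcases ha with ha | rfl <;> rcases hb with hb | rfl
  · rw [fix a ha, fix b hb]; exact σ.refl _ hab
  · rw [fix a ha, Equiv.swap_apply_left]; exact (hmod.2 _ hx y hy a ⟨trivial, ha⟩).2
  · rw [fix b hb, Equiv.swap_apply_left]; exact (hmod.2 _ hx y hy b ⟨trivial, hb⟩).1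
  · exact absurd rfl hab

variable {W : Set V} (hW : W ⊆ Mᶜ)
include hW

theorem isModuleOn_swap_image {N : Set V} (hN : σ.IsModuleOn (W ∪ {x}) N) :
    σ.IsModuleOn (W ∪ {y}) (Equiv.swap x y '' N) := by
  have h := ((preservesRelOn_swap hmod hx hy).mono
    (Set.union_subset_union_left _ hW)).isModuleOn_image hN
  rwa [swap_image_union_singleton (fun h => hW h hx) (fun h => hW h hy)] at h

theorem isPrimeOn_union_singleton_swap (hp : σ.IsPrimeOn (W ∪ {x})) :
    σ.IsPrimeOn (W ∪ {y}) := by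
  have h := ((preservesRelOn_swap hmod hx hy).mono
    (Set.union_subset_union_left _ hW)).isPrimeOn_image hp
  rwa [swap_image_union_singleton (fun h => hW h hx) (fun h => hW h hy)] at h

end SwapInModule

end Swap

theorem isModuleOn_self_or_pair_of_not_isPrimeOn {X : Set V} (hX : σ.IsPrimeOn X) {v : V}
    (hnp : ¬ σ.IsPrimeOn (X ∪ {v})) :
    σ.IsModuleOn (X ∪ {v}) X ∨ ∃ α ∈ X, σ.IsModuleOn (X ∪ {v}) {α, v} := by
  by_contra! ⟨hXmod, hpair⟩
  refine hnp ⟨hX.1.trans (Set.encard_mono Set.subset_union_left), fun N hN => ?_⟩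
  have hsplit : N = N ∩ X ∪ N ∩ {v} := by
    rw [← Set.inter_union_distrib_left, Set.inter_eq_left.mpr hN.1]
  by_cases hvN : v ∈ N
  · rw [Set.inter_eq_right.mpr (Set.singleton_subset_iff.mpr hvN)] at hsplit
    rcases hX.2 _ (hN.inter_s13 Set.subset_union_left) with h | h | ⟨α, h⟩ <;> rw [h] at hsplit
    · exact Or.inr (Or.inr ⟨v, by rw [hsplit, Set.empty_union]⟩)
    · exact Or.inr (Or.inl hsplit)
    · have hα : α ∈ X := (h.symm ▸ Set.mem_singleton α : α ∈ N ∩ X).2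
      rw [Set.singleton_union] at hsplit
      exact absurd (hsplit ▸ hN) (hpair α hα)
  · rw [Set.inter_singleton_eq_empty.mpr hvN, Set.union_empty] at hsplit
    rcases hX.2 _ (hN.inter_s13 Set.subset_union_left) with h | h | ⟨α, h⟩ <;> rw [h] at hsplit
    · exact Or.inl hsplit
    · exact absurd (hsplit ▸ hN) hXmod
    · exact Or.inr (Or.inr ⟨α, hsplit⟩)

section ModuleOutsideX

variable {X M : Set V} (hmod : σ.IsModuleOn Set.univ M) (hM : M ⊆ Xᶜ) {x y : V}
  (hx : x ∈ M) (hy : y ∈ M)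
include hmod hM hx hy

theorem outsideGraph_adj_of_adj_of_mem {v : V} (hv : v ∉ M)
    (h : (σ.outsideGraph X).Adj v x) : (σ.outsideGraph X).Adj v y := by
  classical
  obtain ⟨hvX, -, hvx, hp⟩ := h
  have hW : X ∪ {v} ⊆ Mᶜ :=
    Set.union_subset (Set.subset_compl_comm.mp hM) (Set.singleton_subset_iff.mpr hv)
  refine ⟨hvX, hM hy, fun h => hv (h ▸ hy), ?_⟩
  rw [← Set.singleton_union, ← Set.union_assoc] at hp ⊢
  exact isPrimeOn_union_singleton_swap hmod hx hy hW hp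

theorem mem_innSet_of_mem (h : x ∈ σ.innSet X) : y ∈ σ.innSet X := by
  classical
  have hN := isModuleOn_swap_image hmod hx hy (Set.subset_compl_comm.mp hM) h.2
  rw [swap_image_eq_self (hM hx) (hM hy)] at hN
  exact ⟨hM hy, hN⟩

theorem mem_attSet_of_mem {α : V} (hα : α ∈ X) (h : x ∈ σ.attSet X α) : y ∈ σ.attSet X α := by
  classical
  have hN := isModuleOn_swap_image hmod hx hy (Set.subset_compl_comm.mp hM) h.2
  have hαx : α ≠ x := fun h => hM hx (h ▸ hα)
  have hαy : α ≠ y := fun h => hM hy (h ▸ hα)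
  rw [Set.image_pair, Equiv.swap_apply_of_ne_of_ne hαx hαy, Equiv.swap_apply_left] at hN
  exact ⟨hM hy, hN⟩

end ModuleOutsideX

theorem isModuleOn_outsideGraph {X M : Set V} (hmod : σ.IsModuleOn Set.univ M) (hM : M ⊆ Xᶜ) :
    GraphIsModuleOn (σ.outsideGraph X) Xᶜ M := by
  refine ⟨hM, fun v hv => ?_⟩
  by_cases h : ∃ x ∈ M, (σ.outsideGraph X).Adj v x
  · obtain ⟨x, hx, hvx⟩ := h
    exact Or.inl fun y hy => outsideGraph_adj_of_adj_of_mem hmod hM hx hy hv.2 hvx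
  · exact Or.inr fun y hy hvy => h ⟨y, hy, hvy⟩

section BlocksContainingModule

variable {X M : Set V} (hmod : σ.IsModuleOn Set.univ M) (hM : M ⊆ Xᶜ) {x : V} (hx : x ∈ M)
include hmod hM hx

theorem subset_innSetC (h : x ∈ σ.innSet X) {α₀ : V} (hα₀ : α₀ ∈ X) :
    M ⊆ σ.innSetC X (x, α₀) (α₀, x) := by
  intro z hz
  refine ⟨mem_innSet_of_mem hmod hM hx hz h, fun α hα => ?_⟩
  obtain ⟨hzx_out, hzx_in⟩ := hmod.2 z hz x hx α ⟨trivial, fun h => hM h hα⟩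
  obtain ⟨hX_in, hX_out⟩ := h.2.2 α hα α₀ hα₀ x ⟨Or.inr rfl, hM hx⟩
  exact ⟨σ.trans hzx_out hX_out, σ.trans hzx_in hX_in⟩

theorem subset_attSetC {α : V} (hα : α ∈ X) (h : x ∈ σ.attSet X α) :
    M ⊆ σ.attSetC X α (x, α) (α, x) := fun z hz =>
  have hzx := hmod.2 z hz x hx α ⟨trivial, fun h => hM h hα⟩
  ⟨mem_attSet_of_mem hmod hM hx hz hα h, hzx.1, hzx.2⟩

end BlocksContainingModule

end TwoStructure

theorem statement13_general (σ : TwoStructure V) (X : Set V)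
    (hXp : σ.IsPrimeOn X) (hS1 : σ.extSet X = ∅)
    (M : Set V) (hM : M ⊆ Xᶜ) (hmod : σ.IsModuleOn Set.univ M) :
    GraphIsModuleOn (σ.outsideGraph X) Xᶜ M ∧
      ∃ Bp ∈ σ.pBlocks X, ∃ Bq ∈ σ.qBlocks X,
        M ⊆ Bq ∧ Bq ⊆ Bp ∧ σ.IsModuleOn Bp M := by
  refine ⟨σ.isModuleOn_outsideGraph hmod hM, ?_⟩
  suffices ∃ Bp ∈ σ.pBlocks X, ∃ Bq ∈ σ.qBlocks X, M ⊆ Bq ∧ Bq ⊆ Bp from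
    let ⟨Bp, hBp, Bq, hBq, hMq, hqp⟩ := this
    ⟨Bp, hBp, Bq, hBq, hMq, hqp, hmod.of_subset (hMq.trans hqp) (Set.subset_univ _)⟩
  obtain rfl | ⟨x, hx⟩ := M.eq_empty_or_nonempty
  · exact ⟨_, Or.inl (Or.inl rfl), _, Or.inl (Or.inl rfl), Set.empty_subset _, subset_rfl⟩
  have hnp : ¬ σ.IsPrimeOn (X ∪ {x}) := fun hp =>
    (Set.eq_empty_iff_forall_notMem.mp hS1) x ⟨hM hx, hp⟩
  rcases σ.isModuleOn_self_or_pair_of_not_isPrimeOn hXp hnp with hinn | ⟨α, hα, hatt⟩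
  · obtain ⟨α₀, hα₀⟩ : X.Nonempty :=
      Set.encard_pos.mp (lt_of_lt_of_le (by norm_num) hXp.1)
    exact ⟨_, Or.inl (Or.inr rfl), _, Or.inl (Or.inr ⟨_, _, rfl⟩),
      σ.subset_innSetC hmod hM hx ⟨hM hx, hinn⟩ hα₀, fun _ hz => hz.1⟩
  · exact ⟨_, Or.inr ⟨α, hα, rfl⟩, _, Or.inr ⟨α, hα, _, _, rfl⟩,
      σ.subset_attSetC hmod hM hx hα ⟨hM hx, hatt⟩, fun _ hz => hz.1⟩

/-- Lemma 2.5: under Statement (S1) (`Ext_σ(X) = ∅`), a module `M ⊆ X̄` of `σ`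
is a module of the outside graph and sits inside a block `B_q ⊆ B_p` of the
refined/outside partitions, being a module of `σ[B_p]`. -/
theorem statement13 (σ : TwoStructure V) (X : Set V) (hX : X ⊂ Set.univ)
    (hXp : σ.IsPrimeOn X) (hS1 : σ.extSet X = ∅)
    (M : Set V) (hM : M ⊆ Xᶜ) (hmod : σ.IsModuleOn Set.univ M) :
    GraphIsModuleOn (σ.outsideGraph X) Xᶜ M ∧
      ∃ Bp ∈ σ.pBlocks X, ∃ Bq ∈ σ.qBlocks X,
        M ⊆ Bq ∧ Bq ⊆ Bp ∧ σ.IsModuleOn Bp M :=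
  statement13_general σ X hXp hS1 M hM hmod
end
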